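/- arXiv:1412.2627 — 6 statements merged into one kernel-verified Lean document; each statement's English description precedes it below -/
import Mathlib

section
/- Let E be a measurable space, let (Q_{s,t})_{0≤s≤t} be an evolution operator of sub-Markov kernels on E, fix T > 0, and assume Q_{s,T}1(x) > 0 for all x ∈ E and all 0 ≤ s ≤ T. For 0 ≤ s ≤ t ≤ T define R^T_{s,t}f(x) = Q_{s,t}(f · Q_{t,T}1)(x) / Q_{s,T}1(x) for bounded measurable f : E → ℝ. Then (R^T_{s,t}) is itself an evolution operator of Markov kernels: for all 0 ≤ u ≤ s ≤ t ≤ T, every x ∈ E and every bounded measurable f, R^T_{u,s}(R^T_{s,t} f)(x) = R^T_{u,t} f(x), and moreover R^T_{s,t}1(x) = 1 for all x ∈ E. -/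
/-! With `h_r = Q_{r,T}1`, the definition reads `(R_{s,t}f) · h_s = Q_{s,t}(f · h_t)`, so the
evolution property of `Q` applied to the bounded function `f · h_t` transfers directly to `R`;
for `f = 1` the evolution property gives `Q_{s,t}h_t = h_s`, i.e. `R_{s,t}1 = 1`. -/

open MeasureTheory ProbabilityTheory

namespace ProbabilityTheory.Kernel

variable {α β : Type*} [MeasurableSpace α] [MeasurableSpace β]

lemma measurable_toReal_apply_univ (κ : Kernel α β) :
    Measurable fun x => (κ x Set.univ).toReal :=
  (κ.measurable_coe MeasurableSet.univ).ennreal_toReal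

lemma exists_abs_mul_toReal_apply_univ_le {κ : Kernel α β} (hκ : ∀ x, κ x Set.univ ≤ 1)
    {f : α → ℝ} (hf : ∃ C, ∀ x, |f x| ≤ C) :
    ∃ C, ∀ x, |f x * (κ x Set.univ).toReal| ≤ C := by
  obtain ⟨C, hC⟩ := hf
  refine ⟨C, fun x => ?_⟩
  have hmass : |(κ x Set.univ).toReal| ≤ 1 := by
    rw [abs_of_nonneg ENNReal.toReal_nonneg]
    exact ENNReal.toReal_le_of_le_ofReal zero_le_one (by simpa using hκ x)
  calc |f x * (κ x Set.univ).toReal| = |f x| * |(κ x Set.univ).toReal| := abs_mul _ _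
    _ ≤ C * 1 := mul_le_mul (hC x) hmass (abs_nonneg _) ((abs_nonneg _).trans (hC x))
    _ = C := mul_one C

end ProbabilityTheory.Kernel

theorem conditioned_evolution_operator_general
    {E : Type*} [MeasurableSpace E]
    (Q : ℝ → ℝ → Kernel E E)
    (hsub : ∀ s t, 0 ≤ s → s ≤ t → ∀ x, Q s t x Set.univ ≤ 1)
    (hev : ∀ u s t, 0 ≤ u → u ≤ s → s ≤ t →
      ∀ f : E → ℝ, Measurable f → (∃ C, ∀ y, |f y| ≤ C) →
      ∀ x, ∫ y, (∫ z, f z ∂(Q s t y)) ∂(Q u s x) = ∫ z, f z ∂(Q u t x))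
    (T : ℝ)
    (hpos : ∀ s, 0 ≤ s → s ≤ T → ∀ x, 0 < (Q s T x Set.univ).toReal)
    (R : ℝ → ℝ → (E → ℝ) → E → ℝ)
    (hR : ∀ s t (f : E → ℝ) (x : E), R s t f x =
      (∫ y, f y * (Q t T y Set.univ).toReal ∂(Q s t x)) / (Q s T x Set.univ).toReal) :
    ∀ u s t, 0 ≤ u → u ≤ s → s ≤ t → t ≤ T →
      (∀ f : E → ℝ, Measurable f → (∃ C, ∀ y, |f y| ≤ C) →
        ∀ x, R u s (fun y => R s t f y) x = R u t f x) ∧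
      (∀ x : E, R s t (fun _ => (1 : ℝ)) x = 1) := by
  intro u s t hu hus hst htT
  have hs : 0 ≤ s := hu.trans hus
  have hmass_ne : ∀ y, (Q s T y Set.univ).toReal ≠ 0 :=
    fun y => (hpos s hs (hst.trans htT) y).ne'
  refine ⟨fun f hf hf_bdd x => ?_, fun x => ?_⟩
  · have hRst : ∀ y, R s t f y * (Q s T y Set.univ).toReal =
        ∫ z, f z * (Q t T z Set.univ).toReal ∂(Q s t y) :=
      fun y => by rw [hR]; exact div_mul_cancel₀ _ (hmass_ne y)
    rw [hR, hR]
    simp_rw [hRst]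
    rw [hev u s t hu hus hst (fun z => f z * (Q t T z Set.univ).toReal)
      (hf.mul (Kernel.measurable_toReal_apply_univ _))
      (Kernel.exists_abs_mul_toReal_apply_univ_le (hsub t T (hs.trans hst) htT) hf_bdd) x]
  · have hmass := hev s t T hs hst htT (fun _ => 1) measurable_const ⟨1, by simp⟩ x
    simp only [MeasureTheory.integral_const, smul_eq_mul, mul_one, measureReal_def] at hmass
    rw [hR]
    simp only [one_mul]
    rw [hmass, div_self (hmass_ne x)]

/-- For an evolution operator `(Q_{s,t})` of sub-Markov kernels with
`Q_{s,T}1 > 0`, the conditioned operators `R^T_{s,t}f = Q_{s,t}(f · Q_{t,T}1)/Q_{s,T}1`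
form an evolution operator of Markov kernels. -/
theorem conditioned_evolution_operator
    {E : Type*} [MeasurableSpace E]
    (Q : ℝ → ℝ → Kernel E E)
    (hsub : ∀ s t, 0 ≤ s → s ≤ t → ∀ x, Q s t x Set.univ ≤ 1)
    (hev : ∀ u s t, 0 ≤ u → u ≤ s → s ≤ t →
      ∀ f : E → ℝ, Measurable f → (∃ C, ∀ y, |f y| ≤ C) →
      ∀ x, ∫ y, (∫ z, f z ∂(Q s t y)) ∂(Q u s x) = ∫ z, f z ∂(Q u t x))
    (T : ℝ) (hT : 0 < T)
    (hpos : ∀ s, 0 ≤ s → s ≤ T → ∀ x, 0 < (Q s T x Set.univ).toReal)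
    (R : ℝ → ℝ → (E → ℝ) → E → ℝ)
    (hR : ∀ s t (f : E → ℝ) (x : E), R s t f x =
      (∫ y, f y * (Q t T y Set.univ).toReal ∂(Q s t x)) / (Q s T x Set.univ).toReal) :
    ∀ u s t, 0 ≤ u → u ≤ s → s ≤ t → t ≤ T →
      (∀ f : E → ℝ, Measurable f → (∃ C, ∀ y, |f y| ≤ C) →
        ∀ x, R u s (fun y => R s t f y) x = R u t f x) ∧
      (∀ x : E, R s t (fun _ => (1 : ℝ)) x = 1) :=
  conditioned_evolution_operator_general Q hsub hev T hpos R hR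
end

section
/- Let R be a Markov kernel on a measurable space E and let β ∈ [0,1] be such that for every pair (x,y) ∈ E × E there exists a probability measure η^{x,y} on E with R(x,A) ≥ β η^{x,y}(A) and R(y,A) ≥ β η^{x,y}(A) for every measurable A ⊆ E. Then for every pair of mutually singular probability measures μ₁, μ₂ on E, ‖μ₁R − μ₂R‖_TV ≤ (1 − β)‖μ₁ − μ₂‖_TV. -/
open MeasureTheory ProbabilityTheory

/-- Total variation distance between two measures, defined as the supremum of
`|∫ f dμ − ∫ f dν|` over measurable functions `f` with `‖f‖∞ ≤ 1`. -/
noncomputable def tvDist {E : Type*} [MeasurableSpace E] (μ ν : Measure E) : ℝ :=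
  ⨆ f : {f : E → ℝ // Measurable f ∧ ∀ x, |f x| ≤ 1},
    |(∫ x, f.1 x ∂μ) - ∫ x, f.1 x ∂ν|

/-! A minorization `β η ≤ R x, R y` lets the chains started at `x` and `y` share mass `β`, so
for `|f| ≤ 1` the function `x ↦ ∫ f d(R x)` oscillates by at most `2 (1 - β)`. Integrating it
against `μ₁` and `μ₂` cannot increase that oscillation, while mutually singular probability
measures are at distance exactly `2`. -/

section

variable {α β : Type*} [MeasurableSpace α] [MeasurableSpace β]

lemma integral_bind_kernel (μ : Measure α) [SFinite μ] (κ : Kernel α β) [IsSFiniteKernel κ]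
    {f : β → ℝ} (hf : Integrable f (μ.bind κ)) :
    ∫ y, f y ∂(μ.bind κ) = ∫ x, ∫ y, f y ∂κ x ∂μ := by
  rw [← Measure.snd_compProd] at hf ⊢
  rw [Measure.snd, integral_map measurable_snd.aemeasurable hf.1]
  exact Measure.integral_compProd (hf.comp_measurable measurable_snd)

variable {μ ν m : Measure α} {f g : α → ℝ}

lemma integrable_of_abs_le_one [IsFiniteMeasure μ] (hf : Measurable f) (hb : ∀ x, |f x| ≤ 1) :
    Integrable f μ :=
  .of_bound hf.aestronglyMeasurable 1 (.of_forall hb)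

lemma abs_integral_le_measureReal_univ [IsFiniteMeasure μ] (hb : ∀ x, |f x| ≤ 1) :
    |∫ x, f x ∂μ| ≤ μ.real Set.univ := by
  simpa using norm_integral_le_of_norm_le_const (μ := μ) (f := f) (C := 1)
    (.of_forall fun x => by simpa using hb x)

lemma abs_integral_sub_integral_le_two [IsProbabilityMeasure μ] [IsProbabilityMeasure ν]
    (hb : ∀ x, |f x| ≤ 1) : |∫ x, f x ∂μ - ∫ x, f x ∂ν| ≤ 2 := by
  have hμ := abs_integral_le_measureReal_univ (μ := μ) hb
  have hν := abs_integral_le_measureReal_univ (μ := ν) hb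
  simp only [probReal_univ] at hμ hν
  linarith [abs_sub (∫ x, f x ∂μ) (∫ x, f x ∂ν)]

/-- The difference of the two integrals is the integral against `ν - m`. -/
lemma abs_integral_sub_integral_le_of_le [IsFiniteMeasure ν] (hm : m ≤ ν) (hf : Measurable f)
    (hb : ∀ x, |f x| ≤ 1) :
    |∫ x, f x ∂ν - ∫ x, f x ∂m| ≤ ν.real Set.univ - m.real Set.univ := by
  have : IsFiniteMeasure m := isFiniteMeasure_of_le ν hm
  have : IsFiniteMeasure (ν - m) := isFiniteMeasure_of_le ν Measure.sub_le
  have hν : ν = (ν - m) + m := (Measure.sub_add_cancel_of_le hm).symm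
  have hint : ∫ x, f x ∂ν = ∫ x, f x ∂(ν - m) + ∫ x, f x ∂m := by
    conv_lhs => rw [hν]
    exact integral_add_measure (integrable_of_abs_le_one hf hb) (integrable_of_abs_le_one hf hb)
  have hmass : ν.real Set.univ = (ν - m).real Set.univ + m.real Set.univ := by
    conv_lhs => rw [hν]
    exact measureReal_add_apply
  rw [hint, hmass, add_sub_cancel_right, add_sub_cancel_right]
  exact abs_integral_le_measureReal_univ hb

lemma abs_integral_sub_integral_le_of_le_of_le [IsProbabilityMeasure μ] [IsProbabilityMeasure ν]
    (hμ : m ≤ μ) (hν : m ≤ ν) (hf : Measurable f) (hb : ∀ x, |f x| ≤ 1) :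
    |∫ x, f x ∂μ - ∫ x, f x ∂ν| ≤ 2 * (1 - m.real Set.univ) := by
  have h₁ := abs_integral_sub_integral_le_of_le hμ hf hb
  have h₂ := abs_integral_sub_integral_le_of_le hν hf hb
  simp only [probReal_univ] at h₁ h₂
  linarith [abs_sub_le (∫ x, f x ∂μ) (∫ x, f x ∂m) (∫ x, f x ∂ν),
    abs_sub_comm (∫ x, f x ∂ν) (∫ x, f x ∂m)]

lemma integral_le_integral_add_of_le_add [IsProbabilityMeasure μ] [IsProbabilityMeasure ν]
    {c : ℝ} (hμ : Integrable g μ) (hν : Integrable g ν) (h : ∀ x y, g x ≤ g y + c) :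
    ∫ x, g x ∂μ ≤ ∫ x, g x ∂ν + c := by
  have hpt : ∀ x, g x ≤ ∫ y, g y ∂ν + c := fun x => calc
    g x = ∫ _, g x ∂ν := by simp
    _ ≤ ∫ y, (g y + c) ∂ν := integral_mono (integrable_const _) (hν.add (integrable_const _)) (h x)
    _ = ∫ y, g y ∂ν + c := by rw [integral_add hν (integrable_const _)]; simp
  calc ∫ x, g x ∂μ ≤ ∫ _, (∫ y, g y ∂ν + c) ∂μ := integral_mono hμ (integrable_const _) hpt
    _ = ∫ y, g y ∂ν + c := by simp

lemma abs_integral_sub_integral_le_of_abs_sub_le [IsProbabilityMeasure μ]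
    [IsProbabilityMeasure ν] {c : ℝ} (hμ : Integrable g μ) (hν : Integrable g ν)
    (h : ∀ x y, |g x - g y| ≤ c) : |∫ x, g x ∂μ - ∫ x, g x ∂ν| ≤ c := by
  have hle : ∀ x y, g x ≤ g y + c := fun x y => by linarith [(abs_le.1 (h x y)).2]
  rw [abs_sub_le_iff]
  constructor
  · linarith [integral_le_integral_add_of_le_add hμ hν hle]
  · linarith [integral_le_integral_add_of_le_add hν hμ hle]

lemma tvDist_le {c : ℝ}
    (h : ∀ f : α → ℝ, Measurable f → (∀ x, |f x| ≤ 1) → |∫ x, f x ∂μ - ∫ x, f x ∂ν| ≤ c) :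
    tvDist μ ν ≤ c :=
  have : Nonempty {f : α → ℝ // Measurable f ∧ ∀ x, |f x| ≤ 1} :=
    ⟨⟨0, measurable_const, by simp⟩⟩
  ciSup_le fun f => h f.1 f.2.1 f.2.2

lemma abs_integral_sub_integral_le_tvDist [IsProbabilityMeasure μ] [IsProbabilityMeasure ν]
    (hf : Measurable f) (hb : ∀ x, |f x| ≤ 1) :
    |∫ x, f x ∂μ - ∫ x, f x ∂ν| ≤ tvDist μ ν := by
  refine le_ciSup (f := fun f : {f : α → ℝ // Measurable f ∧ ∀ x, |f x| ≤ 1} =>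
    |∫ x, f.1 x ∂μ - ∫ x, f.1 x ∂ν|) ⟨2, ?_⟩ ⟨f, hf, hb⟩
  rintro _ ⟨f, rfl⟩
  exact abs_integral_sub_integral_le_two f.2.2

/-- The test function `-1` on the null set of `μ` and `1` off it separates singular measures. -/
lemma tvDist_eq_two_of_mutuallySingular [IsProbabilityMeasure μ] [IsProbabilityMeasure ν]
    (h : μ ⟂ₘ ν) : tvDist μ ν = 2 := by
  classical
  refine le_antisymm (tvDist_le fun f _ hb => abs_integral_sub_integral_le_two hb) ?_
  obtain ⟨s, hs, hμs, hνs⟩ := h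
  let f : α → ℝ := fun x => if x ∈ s then -1 else 1
  have hfμ : ∫ x, f x ∂μ = 1 := by
    have : ∀ᵐ x ∂μ, f x = 1 := by
      filter_upwards [measure_eq_zero_iff_ae_notMem.1 hμs] with x hx
      simp [f, hx]
    simp [integral_congr_ae this]
  have hfν : ∫ x, f x ∂ν = -1 := by
    have : ∀ᵐ x ∂ν, f x = -1 := by
      filter_upwards [compl_mem_ae_iff.2 hνs] with x hx
      simp [f, not_not.1 hx]
    simp [integral_congr_ae this]
  have hfb : ∀ x, |f x| ≤ 1 := fun x => by by_cases hx : x ∈ s <;> simp [f, hx]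
  calc (2 : ℝ) = |∫ x, f x ∂μ - ∫ x, f x ∂ν| := by rw [hfμ, hfν]; norm_num
    _ ≤ tvDist μ ν :=
      abs_integral_sub_integral_le_tvDist (Measurable.ite hs measurable_const measurable_const) hfb

end

theorem tv_contraction_of_minorization_singular_general
    {E : Type*} [MeasurableSpace E]
    (R : Kernel E E) [IsMarkovKernel R]
    (β : ℝ)
    (hmin : ∀ x y : E, ∃ η : Measure E, IsProbabilityMeasure η ∧
      (∀ A : Set E, MeasurableSet A → ENNReal.ofReal β * η A ≤ R x A) ∧
      (∀ A : Set E, MeasurableSet A → ENNReal.ofReal β * η A ≤ R y A))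
    (μ₁ μ₂ : Measure E) [IsProbabilityMeasure μ₁] [IsProbabilityMeasure μ₂]
    (hsing : μ₁ ⟂ₘ μ₂) :
    tvDist (μ₁.bind (fun a => R a)) (μ₂.bind (fun a => R a)) ≤ (1 - β) * tvDist μ₁ μ₂ := by
  have hosc : ∀ f : E → ℝ, Measurable f → (∀ x, |f x| ≤ 1) →
      ∀ x y, |∫ z, f z ∂(R x) - ∫ z, f z ∂(R y)| ≤ 2 * (1 - β) := by
    intro f hf hb x y
    obtain ⟨η, hη, hx, hy⟩ := hmin x y
    calc |∫ z, f z ∂(R x) - ∫ z, f z ∂(R y)| ≤ 2 * (1 - (ENNReal.ofReal β • η).real Set.univ) :=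
          abs_integral_sub_integral_le_of_le_of_le (Measure.le_iff.2 hx) (Measure.le_iff.2 hy) hf hb
      _ ≤ 2 * (1 - β) := by
        rw [measureReal_ennreal_smul_apply, probReal_univ, mul_one,
          ENNReal.toReal_ofReal']
        linarith [le_max_left β 0]
  rw [tvDist_eq_two_of_mutuallySingular hsing, mul_comm]
  refine tvDist_le fun f hf hb => ?_
  have hg : Measurable fun x => ∫ z, f z ∂(R x) :=
    hf.stronglyMeasurable.integral_kernel.measurable
  have hgb : ∀ x, |∫ z, f z ∂(R x)| ≤ 1 := fun x => by
    simpa using abs_integral_le_measureReal_univ (μ := R x) hb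
  rw [integral_bind_kernel _ _ (integrable_of_abs_le_one hf hb),
    integral_bind_kernel _ _ (integrable_of_abs_le_one hf hb)]
  exact abs_integral_sub_integral_le_of_abs_sub_le (integrable_of_abs_le_one hg hgb)
    (integrable_of_abs_le_one hg hgb) (hosc f hf hb)

/-- If a Markov kernel `R` admits, for every pair `(x,y)`, a common
minorizing probability measure with mass `β`, then for mutually singular probability
measures `μ₁, μ₂`: `‖μ₁R − μ₂R‖_TV ≤ (1 − β)‖μ₁ − μ₂‖_TV`. -/
theorem tv_contraction_of_minorization_singular
    {E : Type*} [MeasurableSpace E]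
    (R : Kernel E E) [IsMarkovKernel R]
    (β : ℝ) (hβ0 : 0 ≤ β) (hβ1 : β ≤ 1)
    (hmin : ∀ x y : E, ∃ η : Measure E, IsProbabilityMeasure η ∧
      (∀ A : Set E, MeasurableSet A → ENNReal.ofReal β * η A ≤ R x A) ∧
      (∀ A : Set E, MeasurableSet A → ENNReal.ofReal β * η A ≤ R y A))
    (μ₁ μ₂ : Measure E) [IsProbabilityMeasure μ₁] [IsProbabilityMeasure μ₂]
    (hsing : μ₁ ⟂ₘ μ₂) :
    tvDist (μ₁.bind (fun a => R a)) (μ₂.bind (fun a => R a)) ≤ (1 - β) * tvDist μ₁ μ₂ :=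
  tv_contraction_of_minorization_singular_general R β hmin μ₁ μ₂ hsing
end

section
/- Let (Q_{s,t})_{0≤s≤t} be an evolution operator of sub-Markov kernels on a measurable space E, let Π > 0, and assume time-periodicity: Q_{s+Π,t+Π} = Q_{s,t} for all 0 ≤ s ≤ t. Let A ⊆ E be measurable and c > 0 be such that (i) Q_{s,t}1(x) ≤ 2 Q_{s,t}1_A(x) for all x ∈ E whenever t ≥ s + 1, and (ii) Q_{t,t+Π}1(x) ≥ c for all t ≥ 0 and all x ∈ A. Then for all s, t with t ≥ s + Π + 1, ‖Q_{s+Π,t}1‖∞ ≤ (2/c)‖Q_{s,t}1‖∞. -/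
open MeasureTheory ProbabilityTheory

/-! Chapman–Kolmogorov splits `Q_{s+Π,t+Π} = Q_{s+Π,t} Q_{t,t+Π}`; since every point of `A`
survives one period with mass at least `c`, this gives `c Q_{s+Π,t}1_A ≤ Q_{s+Π,t+Π}1`, and the
right-hand side is `Q_{s,t}1` by periodicity. Combined with (i) at the pair `(s + Π, t)`, this
yields `Q_{s+Π,t}1 ≤ (2/c) Q_{s,t}1` pointwise. -/

theorem MeasureTheory.Measure.mul_measure_le_bind_apply {α β : Type*} [MeasurableSpace α]
    [MeasurableSpace β] (μ : Measure α) (η : Kernel α β) {A : Set α} {s : Set β}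
    (hs : MeasurableSet s) {a : ENNReal} (h : ∀ x ∈ A, a ≤ η x s) :
    a * μ A ≤ μ.bind η s := by
  rw [Measure.bind_apply hs η.measurable.aemeasurable]
  calc a * μ A ≤ a * μ {x | a ≤ η x s} := by gcongr; exact h
    _ ≤ ∫⁻ x, η x s ∂μ := mul_meas_ge_le_lintegral₀ (η.measurable_coe hs).aemeasurable a

theorem ENNReal.ofReal_mul_le_ofReal_div_mul {a b : ENNReal} {k c : ℝ} (hc : 0 < c)
    (h : ENNReal.ofReal c * a ≤ b) : ENNReal.ofReal k * a ≤ ENNReal.ofReal (k / c) * b := by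
  have hc₀ : ENNReal.ofReal c ≠ 0 := ENNReal.ofReal_ne_zero_iff.mpr hc
  calc ENNReal.ofReal k * a
      = ENNReal.ofReal k / ENNReal.ofReal c * (ENNReal.ofReal c * a) := by
        rw [← mul_assoc, ENNReal.div_mul_cancel hc₀ ENNReal.ofReal_ne_top]
    _ ≤ ENNReal.ofReal (k / c) * b := by
        rw [ENNReal.ofReal_div_of_pos hc]; gcongr

theorem sup_survival_shift_bound_general
    {E : Type*} [MeasurableSpace E]
    (Q : ℝ → ℝ → Kernel E E)
    (hev : ∀ u s t, 0 ≤ u → u ≤ s → s ≤ t → ∀ x : E,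
      (Q u s x).bind (fun y => Q s t y) = Q u t x)
    (p : ℝ) (hp : 0 < p)
    (hper : ∀ s t, 0 ≤ s → s ≤ t → Q (s + p) (t + p) = Q s t)
    (A : Set E)
    (c : ℝ) (hc : 0 < c)
    (h1 : ∀ s t, 0 ≤ s → s + 1 ≤ t → ∀ x, Q s t x Set.univ ≤ 2 * Q s t x A)
    (h2 : ∀ t, 0 ≤ t → ∀ x ∈ A, ENNReal.ofReal c ≤ Q t (t + p) x Set.univ) :
    ∀ s t, 0 ≤ s → s + p + 1 ≤ t →
      (⨆ x, Q (s + p) t x Set.univ)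
        ≤ ENNReal.ofReal (2 / c) * ⨆ x, Q s t x Set.univ := by
  intro s t hs hst
  refine iSup_le fun y => ?_
  have hA_survival : ENNReal.ofReal c * Q (s + p) t y A ≤ Q (s + p) (t + p) y Set.univ := by
    rw [← hev (s + p) t (t + p) (by linarith) (by linarith) (by linarith) y]
    exact (Q (s + p) t y).mul_measure_le_bind_apply (Q t (t + p)) .univ
      (h2 t (by linarith))
  calc Q (s + p) t y Set.univ
      ≤ ENNReal.ofReal 2 * Q (s + p) t y A := by
        simpa using h1 (s + p) t (by linarith) hst y
    _ ≤ ENNReal.ofReal (2 / c) * Q (s + p) (t + p) y Set.univ :=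
        ENNReal.ofReal_mul_le_ofReal_div_mul hc hA_survival
    _ ≤ ENNReal.ofReal (2 / c) * ⨆ x, Q s t x Set.univ := by
        rw [hper s t hs (by linarith)]
        gcongr
        exact le_iSup (fun x => Q s t x Set.univ) y

/-- For a time-periodic evolution operator of sub-Markov kernels
satisfying (i) `Q_{s,t}1 ≤ 2 Q_{s,t}1_A` for `t ≥ s + 1` and (ii)
`Q_{t,t+Π}1 ≥ c` on `A`, one has `‖Q_{s+Π,t}1‖∞ ≤ (2/c)‖Q_{s,t}1‖∞` whenever
`t ≥ s + Π + 1`. -/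
theorem sup_survival_shift_bound
    {E : Type*} [MeasurableSpace E]
    (Q : ℝ → ℝ → Kernel E E)
    (hsub : ∀ s t, 0 ≤ s → s ≤ t → ∀ x, Q s t x Set.univ ≤ 1)
    (hev : ∀ u s t, 0 ≤ u → u ≤ s → s ≤ t → ∀ x : E,
      (Q u s x).bind (fun y => Q s t y) = Q u t x)
    (p : ℝ) (hp : 0 < p)
    (hper : ∀ s t, 0 ≤ s → s ≤ t → Q (s + p) (t + p) = Q s t)
    (A : Set E) (hA : MeasurableSet A)
    (c : ℝ) (hc : 0 < c)
    (h1 : ∀ s t, 0 ≤ s → s + 1 ≤ t → ∀ x, Q s t x Set.univ ≤ 2 * Q s t x A)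
    (h2 : ∀ t, 0 ≤ t → ∀ x ∈ A, ENNReal.ofReal c ≤ Q t (t + p) x Set.univ) :
    ∀ s t, 0 ≤ s → s + p + 1 ≤ t →
      (⨆ x, Q (s + p) t x Set.univ)
        ≤ ENNReal.ofReal (2 / c) * ⨆ x, Q s t x Set.univ :=
  sup_survival_shift_bound_general Q hev p hp hper A c hc h1 h2
end

section
/- Let D ⊆ ℝ^d, let (Q_{s,t})_{0≤s≤t} be an evolution operator of sub-Markov kernels on D, and let Π > 0, K > 0 and M ≥ 1 be such that: (i) for every s ≥ 0, every bounded measurable f : D → ℝ and all y₁, y₂ ∈ D, |Q_{s,s+Π}f(y₁) − Q_{s,s+Π}f(y₂)| ≤ K ‖f‖∞ |y₁ − y₂|; (ii) for all s, t with t ≥ s + Π + 1, ‖Q_{s+Π,t}1‖∞ ≤ M ‖Q_{s,t}1‖∞. Set r₀ = 1/(2KM). Then for all s, t with t ≥ s + Π + 1, if x_{s,t} ∈ D satisfies Q_{s,t}1(x_{s,t}) = ‖Q_{s,t}1‖∞, then Q_{s,t}1(y) ≥ (1/2)‖Q_{s,t}1‖∞ for every y ∈ D with |y − x_{s,t}|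 ≤ r₀. -/
/-!
Write `u_{s,t} = Q_{s,t}1` and `S = ‖u_{s,t}‖∞`. By the evolution property,
`u_{s,t} = Q_{s,s+Π} u_{s+Π,t}`, and `‖u_{s+Π,t}‖∞ ≤ M S` by (ii). Hence the Lipschitz
bound (i) applied to `f = u_{s+Π,t}` gives `S - u_{s,t}(y) ≤ K M S |y - x_{s,t}|`,
which is at most `S / 2` as soon as `|y - x_{s,t}| ≤ 1 / (2KM)`.
-/

open MeasureTheory ProbabilityTheory

namespace ProbabilityTheory.Kernel

variable {α β : Type*} [MeasurableSpace α] [MeasurableSpace β]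

lemma bddAbove_range_toReal_apply_univ (κ : Kernel α β) (hκ : ∀ x, κ x Set.univ ≤ 1) :
    BddAbove (Set.range fun x => (κ x Set.univ).toReal) := by
  refine ⟨1, ?_⟩
  rintro _ ⟨x, rfl⟩
  simpa using ENNReal.toReal_mono ENNReal.one_ne_top (hκ x)

lemma toReal_apply_univ_le_iSup (κ : Kernel α β) (hκ : ∀ x, κ x Set.univ ≤ 1) (x : α) :
    (κ x Set.univ).toReal ≤ ⨆ x, (κ x Set.univ).toReal :=
  le_ciSup (bddAbove_range_toReal_apply_univ κ hκ) x

lemma toReal_bind_apply (μ : Measure α) (κ : Kernel α β) (hκ : ∀ x, κ x Set.univ ≠ ⊤)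
    {s : Set β} (hs : MeasurableSet s) :
    (μ.bind κ s).toReal = ∫ x, (κ x s).toReal ∂μ := by
  rw [Measure.bind_apply hs κ.measurable.aemeasurable,
    integral_toReal (κ.measurable_coe hs).aemeasurable]
  exact Filter.Eventually.of_forall fun x =>
    (measure_mono (Set.subset_univ s)).trans_lt (hκ x).lt_top

end ProbabilityTheory.Kernel

lemma half_le_of_abs_sub_le {S S' b K M r : ℝ} (hK : 0 < K) (hM : 0 < M) (hS : 0 ≤ S)
    (hS' : S' ≤ M * S) (hb : |b - S| ≤ K * S' * r) (hr₀ : 0 ≤ r)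
    (hr : r ≤ 1 / (2 * K * M)) :
    1 / 2 * S ≤ b := by
  have hKMr : K * M * r ≤ 1 / 2 := by
    calc K * M * r ≤ K * M * (1 / (2 * K * M)) := by gcongr
      _ = 1 / 2 := by field_simp
  calc 1 / 2 * S ≤ S - K * M * r * S := by nlinarith
    _ = S - K * (M * S) * r := by ring
    _ ≤ S - K * S' * r := by gcongr
    _ ≤ b := by linarith [(abs_le.mp hb).1]

/-- For an evolution operator of sub-Markov kernels on `D ⊆ ℝ^d`
such that (i) `Q_{s,s+Π}` is `K‖f‖∞`-Lipschitz and (ii)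
`‖Q_{s+Π,t}1‖∞ ≤ M‖Q_{s,t}1‖∞` for `t ≥ s + Π + 1`, the survival probability
`Q_{s,t}1` is at least half its supremum on the ball of radius `r₀ = 1/(2KM)`
around a maximizing point. -/
theorem survival_half_sup_near_max
    {d : ℕ} (D : Set (EuclideanSpace ℝ (Fin d)))
    (Q : ℝ → ℝ → Kernel D D)
    (hsub : ∀ s t, 0 ≤ s → s ≤ t → ∀ x, Q s t x Set.univ ≤ 1)
    (hev : ∀ u s t, 0 ≤ u → u ≤ s → s ≤ t → ∀ x : D,
      (Q u s x).bind (fun y => Q s t y) = Q u t x)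
    (p K M : ℝ) (hp : 0 < p) (hK : 0 < K) (hM : 1 ≤ M)
    (h1 : ∀ s, 0 ≤ s → ∀ f : D → ℝ, Measurable f → ∀ C : ℝ, (∀ x, |f x| ≤ C) →
      ∀ y₁ y₂ : D,
        |(∫ z, f z ∂(Q s (s + p) y₁)) - ∫ z, f z ∂(Q s (s + p) y₂)|
          ≤ K * C * dist y₁ y₂)
    (h2 : ∀ s t, 0 ≤ s → s + p + 1 ≤ t →
      (⨆ x, (Q (s + p) t x Set.univ).toReal) ≤ M * ⨆ x, (Q s t x Set.univ).toReal) :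
    ∀ s t, 0 ≤ s → s + p + 1 ≤ t → ∀ xst : D,
      (Q s t xst Set.univ).toReal = (⨆ x, (Q s t x Set.univ).toReal) →
      ∀ y : D, dist y xst ≤ 1 / (2 * K * M) →
        (1 / 2) * (⨆ x, (Q s t x Set.univ).toReal) ≤ (Q s t y Set.univ).toReal := by
  intro s t hs hst xst hmax y hy
  have hsp : 0 ≤ s + p := by linarith
  have hspt : s + p ≤ t := by linarith
  have hsub_sp := hsub (s + p) t hsp hspt
  have hsemigroup : ∀ x, ∫ z, (Q (s + p) t z Set.univ).toReal ∂(Q s (s + p) x)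
      = (Q s t x Set.univ).toReal := fun x => by
    rw [← hev s (s + p) t hs (by linarith) hspt x,
      Kernel.toReal_bind_apply _ _ (fun z => ((hsub_sp z).trans_lt ENNReal.one_lt_top).ne)
        MeasurableSet.univ]
  have hlip := h1 s hs _ ((Q (s + p) t).measurable_coe MeasurableSet.univ |>.ennreal_toReal) _
    (fun z => (abs_of_nonneg ENNReal.toReal_nonneg).trans_le
      (Kernel.toReal_apply_univ_le_iSup _ hsub_sp z)) y xst
  rw [hsemigroup, hsemigroup, hmax] at hlip
  have hsup_nonneg : 0 ≤ ⨆ x, (Q s t x Set.univ).toReal :=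
    ENNReal.toReal_nonneg.trans
      (Kernel.toReal_apply_univ_le_iSup _ (hsub s t hs (by linarith)) xst)
  exact half_le_of_abs_sub_le hK (by linarith) hsup_nonneg (h2 s t hs hst) hlip dist_nonneg hy
end

section
/- Let P and R be sub-Markov kernels on a measurable space E, let B ⊆ E be measurable, let c > 0, and let (y₁,y₂) ↦ μ^{y₁,y₂} be a measurable family of probability measures on E indexed by (y₁,y₂) ∈ B × B such that for all (y₁,y₂) ∈ B × B, for i = 1, 2 and every nonnegative bounded measurable f : E → ℝ, Rf(y_i) ≥ c · μ^{y₁,y₂}(f). Let x₁, x₂ ∈ E satisfy P1_B(x₁) > 0 and P1_B(x₂) > 0, and define the probability measure ν on E by ν(f) = (∫_B ∫_B μ^{y₁,y₂}(f) P(x₁,dy₁) P(x₂,dy₂)) / (P1_B(x₁) · P1_B(x₂)). Then for i = 1, 2 and every nonnegative bounded measurable f, P(Rf)(x_i) ≥ c · P1_B(x_i) · ν(f). -/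
/-!
Testing the hypothesis on indicators turns it into the measure inequality
`c • μ^{y₁,y₂} ≤ R(y₁,·)` on `B × B`. Integrating it against `π = P(x₁,·)|_B ⊗ P(x₂,·)|_B` and
pushing forward along the first coordinate gives `c • ∫ μ^y dπ(y) ≤ P(x₂,B) • (R ∘ P)(x₁,·)`,
i.e. `c P(x₁,B) • ν ≤ (R ∘ P)(x₁,·)`; integrating `f` against both sides is the claim for `x₁`,
and the second coordinate gives `x₂`.
-/

open MeasureTheory ProbabilityTheory
open scoped ENNReal

/-- The probability measure `ν` defined by
`ν(f) = (∫_B ∫_B μ^{y₁,y₂}(f) P(x₁,dy₁) P(x₂,dy₂)) / (P1_B(x₁) · P1_B(x₂))`. -/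
noncomputable def averagedMeasure {E : Type*} [MeasurableSpace E]
    (P : Kernel E E) (B : Set E) (μ : E → E → Measure E) (x₁ x₂ : E) : Measure E :=
  (P x₁ B * P x₂ B)⁻¹ •
    ((((P x₁).restrict B).prod ((P x₂).restrict B)).bind (fun p => μ p.1 p.2))

namespace MeasureTheory.Measure

variable {α β γ : Type*} [MeasurableSpace α] [MeasurableSpace β] [MeasurableSpace γ]

lemma smul_bind_le_map_bind {π : Measure α} {κ : α → Measure β} (hκ : Measurable κ)
    {η : Kernel γ β} {φ : α → γ} (hφ : Measurable φ) {r : ℝ≥0∞}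
    (h : ∀ᵐ a ∂π, r • κ a ≤ η (φ a)) : r • π.bind κ ≤ (π.map φ).bind η := by
  refine le_iff.2 fun s hs => ?_
  rw [smul_apply, smul_eq_mul, bind_apply hs hκ.aemeasurable,
    bind_apply hs η.measurable.aemeasurable, lintegral_map (η.measurable_coe hs) hφ,
    ← lintegral_const_mul r (f := fun a => κ a s) ((measurable_coe hs).comp hκ)]
  exact lintegral_mono_ae (h.mono fun a ha => ha s)

lemma ae_mem_prod_restrict {m₁ : Measure α} {m₂ : Measure β} [SFinite m₁] [SFinite m₂]
    {s : Set α} {t : Set β} (hs : MeasurableSet s) (ht : MeasurableSet t) :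
    ∀ᵐ p ∂(m₁.restrict s).prod (m₂.restrict t), p.1 ∈ s ∧ p.2 ∈ t := by
  rw [prod_restrict]
  exact ae_restrict_mem (hs.prod ht)

lemma bind_mono_left {m m' : Measure α} (h : m ≤ m') (η : Kernel α β) :
    m.bind η ≤ m'.bind η := by
  refine le_iff.2 fun s hs => ?_
  rw [bind_apply hs η.measurable.aemeasurable, bind_apply hs η.measurable.aemeasurable]
  exact lintegral_mono' h le_rfl

lemma smul_inv_mul_smul_le_of_smul_le {μ ν : Measure α} {r a b : ℝ≥0∞} (ha : a ≠ ∞) (hb : b ≠ ∞)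
    (h : r • μ ≤ b • ν) : (r * a) • (a * b)⁻¹ • μ ≤ ν := by
  intro s
  have hs : r * μ s ≤ b * ν s := h s
  simp only [smul_apply, smul_eq_mul]
  calc r * a * ((a * b)⁻¹ * μ s) = (a * a⁻¹) * (b⁻¹ * (r * μ s)) := by
        rw [ENNReal.mul_inv (.inr hb) (.inl ha)]; ring
    _ ≤ 1 * (b⁻¹ * (b * ν s)) := by gcongr; exact ENNReal.mul_inv_le_one a
    _ ≤ ν s := by
        rw [one_mul, ← mul_assoc]
        exact mul_le_of_le_one_left' (ENNReal.inv_mul_le_one b)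

lemma ofReal_smul_le_of_integral_le {μ ν : Measure α} [IsFiniteMeasure μ] [IsFiniteMeasure ν]
    {c : ℝ} (h : ∀ f : α → ℝ, Measurable f → (∀ z, 0 ≤ f z) → (∃ C, ∀ z, f z ≤ C) →
      c * ∫ z, f z ∂μ ≤ ∫ z, f z ∂ν) :
    ENNReal.ofReal c • μ ≤ ν := by
  refine le_iff.2 fun s hs => ?_
  have hind := h (s.indicator 1) (measurable_one.indicator hs)
    (Set.indicator_nonneg fun _ _ => zero_le_one)
    ⟨1, fun z => Set.indicator_apply_le' (fun _ => le_rfl) fun _ => zero_le_one⟩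
  rw [integral_indicator_one hs, integral_indicator_one hs] at hind
  rw [smul_apply, smul_eq_mul, ← ofReal_measureReal, ← ofReal_measureReal,
    ← ENNReal.ofReal_mul' measureReal_nonneg]
  exact ENNReal.ofReal_le_ofReal hind

lemma mul_integral_le_of_ofReal_smul_le {μ ν : Measure α} {r : ℝ} (hr : 0 ≤ r)
    (h : ENNReal.ofReal r • μ ≤ ν) {f : α → ℝ} (hf : 0 ≤ᵐ[ν] f) (hfi : Integrable f ν) :
    r * ∫ z, f z ∂μ ≤ ∫ z, f z ∂ν := by
  calc r * ∫ z, f z ∂μ = ∫ z, f z ∂(ENNReal.ofReal r • μ) := by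
        rw [integral_smul_measure, ENNReal.toReal_ofReal hr, smul_eq_mul]
    _ ≤ ∫ z, f z ∂ν := integral_mono_measure h hf hfi

end MeasureTheory.Measure

section averagedMeasure

open Measure

variable {E : Type*} [MeasurableSpace E] {P R : Kernel E E} [IsFiniteKernel P] {B : Set E}
  {μ : E → E → Measure E} {x₁ x₂ : E} {r : ℝ≥0∞}

lemma smul_averagedMeasure_le_comp_left (hB : MeasurableSet B)
    (hμ : Measurable fun q : E × E => μ q.1 q.2) (h : ∀ y₁ ∈ B, ∀ y₂ ∈ B, r • μ y₁ y₂ ≤ R y₁) :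
    (r * P x₁ B) • averagedMeasure P B μ x₁ x₂ ≤ (R ∘ₖ P) x₁ := by
  refine smul_inv_mul_smul_le_of_smul_le (measure_ne_top _ _) (measure_ne_top _ _) ?_
  calc r • (((P x₁).restrict B).prod ((P x₂).restrict B)).bind (fun p => μ p.1 p.2)
      ≤ ((((P x₁).restrict B).prod ((P x₂).restrict B)).map Prod.fst).bind R :=
        smul_bind_le_map_bind hμ measurable_fst
          ((ae_mem_prod_restrict hB hB).mono fun p hp => h _ hp.1 _ hp.2)
    _ = P x₂ B • ((P x₁).restrict B).bind R := by
        rw [map_fst_prod, restrict_apply_univ, bind_smul]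
    _ ≤ P x₂ B • (R ∘ₖ P) x₁ := by
        rw [Kernel.comp_apply]
        gcongr
        exact bind_mono_left restrict_le_self R

lemma smul_averagedMeasure_le_comp_right (hB : MeasurableSet B)
    (hμ : Measurable fun q : E × E => μ q.1 q.2) (h : ∀ y₁ ∈ B, ∀ y₂ ∈ B, r • μ y₁ y₂ ≤ R y₂) :
    (r * P x₂ B) • averagedMeasure P B μ x₁ x₂ ≤ (R ∘ₖ P) x₂ := by
  rw [averagedMeasure, mul_comm (P x₁ B)]
  refine smul_inv_mul_smul_le_of_smul_le (measure_ne_top _ _) (measure_ne_top _ _) ?_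
  calc r • (((P x₁).restrict B).prod ((P x₂).restrict B)).bind (fun p => μ p.1 p.2)
      ≤ ((((P x₁).restrict B).prod ((P x₂).restrict B)).map Prod.snd).bind R :=
        smul_bind_le_map_bind hμ measurable_snd
          ((ae_mem_prod_restrict hB hB).mono fun p hp => h _ hp.1 _ hp.2)
    _ = P x₁ B • ((P x₂).restrict B).bind R := by
        rw [map_snd_prod, restrict_apply_univ, bind_smul]
    _ ≤ P x₁ B • (R ∘ₖ P) x₂ := by
        rw [Kernel.comp_apply]
        gcongr
        exact bind_mono_left restrict_le_self R

end averagedMeasure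

theorem averaged_minorization_general
    {E : Type*} [MeasurableSpace E]
    (P R : Kernel E E)
    (hPsub : ∀ x, P x Set.univ ≤ 1) (hRsub : ∀ x, R x Set.univ ≤ 1)
    (B : Set E) (hB : MeasurableSet B)
    (c : ℝ) (hc : 0 < c)
    (μ : E → E → Measure E)
    (hμmeas : ∀ A : Set E, MeasurableSet A → Measurable (fun q : E × E => μ q.1 q.2 A))
    (hμprob : ∀ y₁ ∈ B, ∀ y₂ ∈ B, IsProbabilityMeasure (μ y₁ y₂))
    (hmin : ∀ y₁ ∈ B, ∀ y₂ ∈ B,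
      ∀ f : E → ℝ, Measurable f → (∀ z, 0 ≤ f z) → (∃ C, ∀ z, f z ≤ C) →
        c * (∫ z, f z ∂(μ y₁ y₂)) ≤ (∫ z, f z ∂(R y₁)) ∧
        c * (∫ z, f z ∂(μ y₁ y₂)) ≤ ∫ z, f z ∂(R y₂))
    (x₁ x₂ : E) :
    ∀ f : E → ℝ, Measurable f → (∀ z, 0 ≤ f z) → (∃ C, ∀ z, f z ≤ C) →
      c * (P x₁ B).toReal * (∫ z, f z ∂(averagedMeasure P B μ x₁ x₂))
          ≤ (∫ y, (∫ z, f z ∂(R y)) ∂(P x₁)) ∧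
      c * (P x₂ B).toReal * (∫ z, f z ∂(averagedMeasure P B μ x₁ x₂))
          ≤ ∫ y, (∫ z, f z ∂(R y)) ∂(P x₂) := by
  have : IsFiniteKernel P := ⟨⟨1, ENNReal.one_lt_top, hPsub⟩⟩
  have : IsFiniteKernel R := ⟨⟨1, ENNReal.one_lt_top, hRsub⟩⟩
  have hμ : Measurable fun q : E × E => μ q.1 q.2 := Measure.measurable_of_measurable_coe _ hμmeas
  have hμR : ∀ y₁ ∈ B, ∀ y₂ ∈ B,
      ENNReal.ofReal c • μ y₁ y₂ ≤ R y₁ ∧ ENNReal.ofReal c • μ y₁ y₂ ≤ R y₂ := by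
    intro y₁ hy₁ y₂ hy₂
    have := hμprob y₁ hy₁ y₂ hy₂
    exact ⟨Measure.ofReal_smul_le_of_integral_le fun f hf hf0 hfC =>
        (hmin y₁ hy₁ y₂ hy₂ f hf hf0 hfC).1,
      Measure.ofReal_smul_le_of_integral_le fun f hf hf0 hfC =>
        (hmin y₁ hy₁ y₂ hy₂ f hf hf0 hfC).2⟩
  rintro f hf hf0 ⟨C, hC⟩
  have hfi : ∀ x, Integrable f ((R ∘ₖ P) x) := fun x =>
    .of_bound hf.aestronglyMeasurable C (ae_of_all _ fun z => by
      rw [Real.norm_of_nonneg (hf0 z)]; exact hC z)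
  have key : ∀ x, (ENNReal.ofReal c * P x B) • averagedMeasure P B μ x₁ x₂ ≤ (R ∘ₖ P) x →
      c * (P x B).toReal * ∫ z, f z ∂(averagedMeasure P B μ x₁ x₂)
        ≤ ∫ y, (∫ z, f z ∂(R y)) ∂(P x) := fun x hle => by
    rw [← Kernel.integral_comp (hfi x)]
    exact Measure.mul_integral_le_of_ofReal_smul_le (mul_nonneg hc.le ENNReal.toReal_nonneg)
      (by rwa [ENNReal.ofReal_mul hc.le, ENNReal.ofReal_toReal (measure_ne_top _ _)])
      (ae_of_all _ hf0) (hfi x)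
  exact ⟨key x₁ (smul_averagedMeasure_le_comp_left hB hμ fun y₁ h₁ y₂ h₂ => (hμR y₁ h₁ y₂ h₂).1),
    key x₂ (smul_averagedMeasure_le_comp_right hB hμ fun y₁ h₁ y₂ h₂ => (hμR y₁ h₁ y₂ h₂).2)⟩

/-- If `Rf(y_i) ≥ c μ^{y₁,y₂}(f)` for all `(y₁,y₂) ∈ B × B`, then
`P(Rf)(x_i) ≥ c · P1_B(x_i) · ν(f)` for `i = 1,2`, where `ν` is the averaged
measure built from the family `μ^{y₁,y₂}` through `P(x₁,·)` and `P(x₂,·)`. -/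
theorem averaged_minorization
    {E : Type*} [MeasurableSpace E]
    (P R : Kernel E E)
    (hPsub : ∀ x, P x Set.univ ≤ 1) (hRsub : ∀ x, R x Set.univ ≤ 1)
    (B : Set E) (hB : MeasurableSet B)
    (c : ℝ) (hc : 0 < c)
    (μ : E → E → Measure E)
    (hμmeas : ∀ A : Set E, MeasurableSet A → Measurable (fun q : E × E => μ q.1 q.2 A))
    (hμprob : ∀ y₁ ∈ B, ∀ y₂ ∈ B, IsProbabilityMeasure (μ y₁ y₂))
    (hmin : ∀ y₁ ∈ B, ∀ y₂ ∈ B,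
      ∀ f : E → ℝ, Measurable f → (∀ z, 0 ≤ f z) → (∃ C, ∀ z, f z ≤ C) →
        c * (∫ z, f z ∂(μ y₁ y₂)) ≤ (∫ z, f z ∂(R y₁)) ∧
        c * (∫ z, f z ∂(μ y₁ y₂)) ≤ ∫ z, f z ∂(R y₂))
    (x₁ x₂ : E) (h₁ : 0 < P x₁ B) (h₂ : 0 < P x₂ B) :
    ∀ f : E → ℝ, Measurable f → (∀ z, 0 ≤ f z) → (∃ C, ∀ z, f z ≤ C) →
      c * (P x₁ B).toReal * (∫ z, f z ∂(averagedMeasure P B μ x₁ x₂))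
          ≤ (∫ y, (∫ z, f z ∂(R y)) ∂(P x₁)) ∧
      c * (P x₂ B).toReal * (∫ z, f z ∂(averagedMeasure P B μ x₁ x₂))
          ≤ ∫ y, (∫ z, f z ∂(R y)) ∂(P x₂) :=
  averaged_minorization_general P R hPsub hRsub B hB c hc μ hμmeas hμprob hmin x₁ x₂
end

section
/- Let Q be a sub-Markov kernel on a measurable space E, let x ∈ E, let β > 0 and ε > 0, let ν be a probability measure on E, let B ⊆ E be measurable with ν(B) ≥ ε, and let g : E → ℝ be a nonnegative bounded measurable function with ‖g‖∞ > 0 and g(y) ≥ (1/2)‖g‖∞ for all y ∈ B. Assume that Qf(x) ≥ β · Q1(x) · ν(f) for every nonnegative bounded measurable f : E → ℝ, and that Q(g)(x) > 0. Then for every nonnegative bounded measurable f, Q(f·g)(x) / Q(g)(x) ≥ (βε/2) · η(f), where η is the probability measure defined by η(A) = ν(A ∩ B)/ν(B). -/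
open MeasureTheory ProbabilityTheory

/-! Write `M = ‖g‖∞`. Minorization applied to `f g` gives
`Q(fg)(x) ≥ β Q1(x) ν(fg) ≥ β Q1(x) (M/2) ν(f 1_B)`, while `Q(g)(x) ≤ M Q1(x)`; in the quotient the
factor `M Q1(x)` cancels, and `ν(f 1_B) = ν(B) η(f) ≥ ε η(f)`. -/

section

variable {E : Type*} [MeasurableSpace E]

lemma integrable_of_measurable_of_nonneg_of_le {μ : Measure E} [IsFiniteMeasure μ]
    {f : E → ℝ} {C : ℝ} (hf : Measurable f) (hf0 : ∀ z, 0 ≤ f z) (hfC : ∀ z, f z ≤ C) :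
    Integrable f μ :=
  .of_bound hf.aestronglyMeasurable C
    (.of_forall fun z => by rw [Real.norm_of_nonneg (hf0 z)]; exact hfC z)

lemma integral_le_mul_measureReal_univ {μ : Measure E} [IsFiniteMeasure μ]
    {g : E → ℝ} {M : ℝ} (hg0 : ∀ z, 0 ≤ g z) (hgM : ∀ z, g z ≤ M) :
    ∫ z, g z ∂μ ≤ M * μ.real Set.univ :=
  (le_abs_self _).trans <| norm_integral_le_of_norm_le_const <|
    .of_forall fun z => by rw [Real.norm_of_nonneg (hg0 z)]; exact hgM z

lemma mul_setIntegral_le_integral_mul {ν : Measure E} {B : Set E} (hB : MeasurableSet B)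
    {f g : E → ℝ} {c : ℝ} (hf : Integrable f ν) (hfg : Integrable (fun z => f z * g z) ν)
    (hf0 : ∀ z, 0 ≤ f z) (hg0 : ∀ z, 0 ≤ g z) (hcg : ∀ y ∈ B, c ≤ g y) :
    c * ∫ z in B, f z ∂ν ≤ ∫ z, f z * g z ∂ν :=
  calc c * ∫ z in B, f z ∂ν = ∫ z in B, c * f z ∂ν := (integral_const_mul c _).symm
    _ ≤ ∫ z in B, f z * g z ∂ν :=
      setIntegral_mono_on (hf.const_mul c).integrableOn hfg.integrableOn hB fun y hy => by
        rw [mul_comm]; exact mul_le_mul_of_nonneg_left (hcg y hy) (hf0 y)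
    _ ≤ ∫ z, f z * g z ∂ν :=
      setIntegral_le_integral hfg (.of_forall fun z => mul_nonneg (hf0 z) (hg0 z))

lemma mul_integral_cond_le_setIntegral {ν : Measure E} [IsFiniteMeasure ν] {B : Set E}
    {ε : ℝ} (hνB : ENNReal.ofReal ε ≤ ν B) {f : E → ℝ} (hf0 : ∀ z, 0 ≤ f z) :
    ε * ∫ z, f z ∂((ν B)⁻¹ • ν.restrict B) ≤ ∫ z in B, f z ∂ν := by
  rw [integral_smul_measure, ENNReal.toReal_inv, smul_eq_mul]
  have hε : ε ≤ (ν B).toReal := (ENNReal.ofReal_le_iff_le_toReal (measure_ne_top ν B)).1 hνB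
  have hI : 0 ≤ ∫ z in B, f z ∂ν := integral_nonneg hf0
  calc ε * ((ν B).toReal⁻¹ * ∫ z in B, f z ∂ν)
      ≤ (ν B).toReal * ((ν B).toReal⁻¹ * ∫ z in B, f z ∂ν) := by gcongr
    _ ≤ ∫ z in B, f z ∂ν := by
      rw [← mul_assoc]; exact mul_le_of_le_one_left hI mul_inv_le_one

end

theorem conditioned_kernel_minorization_general
    {E : Type*} [MeasurableSpace E]
    (Q : Kernel E E) (hsub : ∀ x, Q x Set.univ ≤ 1)
    (x : E) (β ε : ℝ) (hβ : 0 < β)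
    (ν : Measure E) [IsProbabilityMeasure ν]
    (B : Set E) (hB : MeasurableSet B) (hνB : ENNReal.ofReal ε ≤ ν B)
    (g : E → ℝ) (hg : Measurable g) (hg0 : ∀ z, 0 ≤ g z)
    (hgbdd : BddAbove (Set.range g))
    (hgB : ∀ y ∈ B, (1 / 2) * (⨆ z, g z) ≤ g y)
    (hmin : ∀ f : E → ℝ, Measurable f → (∀ z, 0 ≤ f z) → (∃ C, ∀ z, f z ≤ C) →
      β * (Q x Set.univ).toReal * (∫ z, f z ∂ν) ≤ ∫ z, f z ∂(Q x))
    (hQg : 0 < ∫ z, g z ∂(Q x)) :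
    ∀ f : E → ℝ, Measurable f → (∀ z, 0 ≤ f z) → (∃ C, ∀ z, f z ≤ C) →
      (β * ε / 2) * (∫ z, f z ∂((ν B)⁻¹ • ν.restrict B))
        ≤ (∫ z, f z * g z ∂(Q x)) / ∫ z, g z ∂(Q x) := by
  intro f hf hf0 ⟨C, hfC⟩
  have : IsFiniteMeasure (Q x) := ⟨(hsub x).trans_lt ENNReal.one_lt_top⟩
  set M := ⨆ z, g z
  have hgM : ∀ z, g z ≤ M := le_ciSup hgbdd
  have hfg0 : ∀ z, 0 ≤ f z * g z := fun z => mul_nonneg (hf0 z) (hg0 z)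
  have hfgC : ∀ z, f z * g z ≤ C * M := fun z =>
    mul_le_mul (hfC z) (hgM z) (hg0 z) ((hf0 z).trans (hfC z))
  have hνfg : 1 / 2 * M * ∫ z in B, f z ∂ν ≤ ∫ z, f z * g z ∂ν :=
    mul_setIntegral_le_integral_mul hB (integrable_of_measurable_of_nonneg_of_le hf hf0 hfC)
      (integrable_of_measurable_of_nonneg_of_le (hf.mul hg) hfg0 hfgC) hf0 hg0 hgB
  have hQfg := hmin _ (hf.mul hg) hfg0 ⟨C * M, hfgC⟩
  have hQg_le : ∫ z, g z ∂(Q x) ≤ M * (Q x Set.univ).toReal :=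
    integral_le_mul_measureReal_univ hg0 hgM
  have hη := mul_integral_cond_le_setIntegral hνB hf0
  have hIB : 0 ≤ ∫ z in B, f z ∂ν := integral_nonneg hf0
  rw [le_div_iff₀ hQg]
  calc β * ε / 2 * (∫ z, f z ∂((ν B)⁻¹ • ν.restrict B)) * ∫ z, g z ∂(Q x)
      = β / 2 * (ε * ∫ z, f z ∂((ν B)⁻¹ • ν.restrict B)) * ∫ z, g z ∂(Q x) := by ring
    _ ≤ β / 2 * (∫ z in B, f z ∂ν) * (M * (Q x Set.univ).toReal) := by gcongr
    _ = β * (Q x Set.univ).toReal * (1 / 2 * M * ∫ z in B, f z ∂ν) := by ring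
    _ ≤ β * (Q x Set.univ).toReal * ∫ z, f z * g z ∂ν := by gcongr
    _ ≤ ∫ z, f z * g z ∂(Q x) := hQfg

/-- If `Qf(x) ≥ β Q1(x) ν(f)` for all nonnegative bounded measurable
`f`, `ν(B) ≥ ε`, and `g ≥ (1/2)‖g‖∞ > 0` on `B`, then
`Q(fg)(x)/Q(g)(x) ≥ (βε/2) η(f)` where `η = ν(· ∩ B)/ν(B)`. -/
theorem conditioned_kernel_minorization
    {E : Type*} [MeasurableSpace E]
    (Q : Kernel E E) (hsub : ∀ x, Q x Set.univ ≤ 1)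
    (x : E) (β ε : ℝ) (hβ : 0 < β) (hε : 0 < ε)
    (ν : Measure E) [IsProbabilityMeasure ν]
    (B : Set E) (hB : MeasurableSet B) (hνB : ENNReal.ofReal ε ≤ ν B)
    (g : E → ℝ) (hg : Measurable g) (hg0 : ∀ z, 0 ≤ g z)
    (hgbdd : BddAbove (Set.range g))
    (hgsup : 0 < ⨆ z, g z)
    (hgB : ∀ y ∈ B, (1 / 2) * (⨆ z, g z) ≤ g y)
    (hmin : ∀ f : E → ℝ, Measurable f → (∀ z, 0 ≤ f z) → (∃ C, ∀ z, f z ≤ C) →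
      β * (Q x Set.univ).toReal * (∫ z, f z ∂ν) ≤ ∫ z, f z ∂(Q x))
    (hQg : 0 < ∫ z, g z ∂(Q x)) :
    ∀ f : E → ℝ, Measurable f → (∀ z, 0 ≤ f z) → (∃ C, ∀ z, f z ≤ C) →
      (β * ε / 2) * (∫ z, f z ∂((ν B)⁻¹ • ν.restrict B))
        ≤ (∫ z, f z * g z ∂(Q x)) / ∫ z, g z ∂(Q x) :=
  conditioned_kernel_minorization_general Q hsub x β ε hβ ν B hB hνB g hg hg0 hgbdd hgB hmin hQg
end
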